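/- Let r ≥ 3 and 1 ≤ s < r. Then the maps b₁, …, b_r are homeomorphisms of X = {0,1}^ℕ, the group H̃_r = ⟨b₁, …, b_r⟩ ≤ Homeo(X) contains a non-Hausdorff element, and the action of H̃_r on X is not locally quasi-analytic. -/

import Mathlib

/-- The group of self-homeomorphisms of a topological space, with composition
`(f * g) x = f (g x)`. -/
instance homeoGroup {X : Type*} [TopologicalSpace X] : Group (X ≃ₜ X) where
  mul f g := g.trans f
  one := Homeomorph.refl X
  inv := Homeomorph.symm
  mul_assoc _ _ _ := Homeomorph.ext fun _ => rfl
  one_mul _ := Homeomorph.ext fun _ => rfl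
  mul_one _ := Homeomorph.ext fun _ => rfl
  inv_mul_cancel f := Homeomorph.ext f.symm_apply_apply

/-- The standard metric on the Cantor set `{0,1}^ℕ`, inducing the product topology. -/
noncomputable instance : MetricSpace (ℕ → Fin 2) := PiNat.metricSpace

/-- Prepend the letter `v` to the sequence `x`. -/
def cons (v : Fin 2) (x : ℕ → Fin 2) : ℕ → Fin 2
  | 0 => v
  | n + 1 => x n

/-- Pink's recursive equations for the generators `b₁, …, b_r` of the group `H̃_r`
(strictly pre-periodic case with pre-period `s`): `b₁(v·w) = (1-v)·w`,
`b_{s+1}(0·w) = 0·b_s(w)`, `b_{s+1}(1·w) = 1·b_r(w)`, and for `2 ≤ i ≤ r` with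
`i ≠ s+1`, `b_i(0·w) = 0·b_{i-1}(w)`, `b_i(1·w) = 1·w`. -/
def PinkPreRec (r s : ℕ) (b : ℕ → (ℕ → Fin 2) → (ℕ → Fin 2)) : Prop :=
  (∀ w, b 1 (cons 0 w) = cons 1 w) ∧
  (∀ w, b 1 (cons 1 w) = cons 0 w) ∧
  (∀ w, b (s + 1) (cons 0 w) = cons 0 (b s w)) ∧
  (∀ w, b (s + 1) (cons 1 w) = cons 1 (b r w)) ∧
  ∀ i, 2 ≤ i → i ≤ r → i ≠ s + 1 →
    (∀ w, b i (cons 0 w) = cons 0 (b (i - 1) w)) ∧ (∀ w, b i (cons 1 w) = cons 1 w)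

/-- An action of a family `Γ` of self-maps of a metric space `X` is locally quasi-analytic
if there is `ε > 0` such that for every open set `U` of diameter less than `ε`,
any two elements of `Γ` that agree on a nonempty open subset `V ⊆ U` agree on all of `U`. -/
def IsLocallyQuasiAnalytic {X : Type*} [MetricSpace X] (Γ : Set (X → X)) : Prop :=
  ∃ ε > (0 : ℝ), ∀ U : Set X, IsOpen U → Metric.diam U < ε →
    ∀ g₁ ∈ Γ, ∀ g₂ ∈ Γ, ∀ V : Set X, V ⊆ U → IsOpen V → V.Nonempty →
      Set.EqOn g₁ g₂ V → Set.EqOn g₁ g₂ U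

/-- `g` is a non-Hausdorff element: it fixes a point `x`, is not the identity on any open
neighborhood of `x`, yet every open neighborhood of `x` contains a nonempty open subset
on which `g` is the identity. -/
def IsNonHausdorffElement {X : Type*} [TopologicalSpace X] (g : X → X) : Prop :=
  ∃ x : X, g x = x ∧
    (∀ W : Set X, IsOpen W → x ∈ W → ¬ Set.EqOn g id W) ∧
    (∀ W : Set X, IsOpen W → x ∈ W → ∃ O : Set X, IsOpen O ∧ O.Nonempty ∧ O ⊆ W ∧
      Set.EqOn g id O)

/-!
Pink's generators are realised by an explicit automaton: states `1, …, r` stand for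
`b₁, …, b_r`, state `0` for the identity, and `b_i` flips exactly the letters read in state `1`.
The recursion determines the generators coordinate by coordinate, so these are the only
solutions, and each of them is a continuous involution.

Along `x* = (1 0^{r-s-1})^∞` the states of `b_{s+1}` cycle through `s+1, r, r-1, …, s+2` and
never reach `1`, so `x*` is fixed. Continuing a prefix of `x*` by zeros walks the state down to
`1`, so `b_{s+1}` moves points arbitrarily close to `x*`; but two well-chosen letters reach the
identity state `0` without passing through `1`, which gives cylinders arbitrarily close to `x*`
on which `b_{s+1}` is the identity. Thus `b_{s+1}` is a non-Hausdorff element, and comparing it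
with the identity on a small ball around `x*` contradicts local quasi-analyticity.
-/

theorem cons_head_tail (x : ℕ → Fin 2) : cons (x 0) (fun k => x (k + 1)) = x := by
  funext n; cases n <;> rfl

theorem IsNonHausdorffElement.not_isLocallyQuasiAnalytic {X : Type*} [MetricSpace X]
    {Γ : Set (X → X)} {g : X → X} (hg : IsNonHausdorffElement g) (hid : id ∈ Γ) (hgΓ : g ∈ Γ) :
    ¬ IsLocallyQuasiAnalytic Γ := by
  rintro ⟨ε, hε, hLQA⟩
  obtain ⟨x, -, hnot, hfix⟩ := hg
  have hdiam : Metric.diam (Metric.ball x (ε / 3)) < ε :=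
    (Metric.diam_ball (by positivity)).trans_lt (by linarith)
  have hx : x ∈ Metric.ball x (ε / 3) := Metric.mem_ball_self (by positivity)
  obtain ⟨O, hO, hOne, hOW, hgO⟩ := hfix _ Metric.isOpen_ball hx
  exact hnot _ Metric.isOpen_ball hx
    (hLQA _ Metric.isOpen_ball hdiam g hgΓ id hid O hOW hO hOne hgO)

theorem PiNat.isNonHausdorffElement_of_cylinder {E : ℕ → Type*} [∀ n, TopologicalSpace (E n)]
    [∀ n, DiscreteTopology (E n)] {g : (∀ n, E n) → ∀ n, E n} {x : ∀ n, E n} (hx : g x = x)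
    (hmoved : ∀ N, ∃ y ∈ cylinder x N, g y ≠ y)
    (hfixed : ∀ N, ∃ z ∈ cylinder x N, ∃ M, ∀ y ∈ cylinder z M, g y = y) :
    IsNonHausdorffElement g := by
  have hnhds : ∀ W, IsOpen W → x ∈ W → ∃ N, cylinder x N ⊆ W := fun W hW hxW => by
    obtain ⟨_, ⟨y, N, rfl⟩, hxV, hVW⟩ :=
      (isTopologicalBasis_cylinders E).exists_subset_of_mem_open hxW hW
    exact ⟨N, mem_cylinder_iff_eq.1 hxV ▸ hVW⟩
  refine ⟨x, hx, fun W hW hxW hgW => ?_, fun W hW hxW => ?_⟩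
  · obtain ⟨N, hN⟩ := hnhds W hW hxW
    obtain ⟨y, hy, hgy⟩ := hmoved N
    exact hgy (hgW (hN hy))
  · obtain ⟨N, hN⟩ := hnhds W hW hxW
    obtain ⟨z, hz, M, hgz⟩ := hfixed N
    refine ⟨cylinder z (max N M), isOpen_cylinder E _ _, ⟨z, self_mem_cylinder _ _⟩,
      fun y hy => hN fun i hi => (hy i (lt_max_of_lt_left hi)).trans (hz i hi),
      fun y hy => hgz y (cylinder_anti _ (le_max_right _ _) hy)⟩

theorem eq_of_cons_recursion {σ : Type*} {S : Set σ} (next : σ → Fin 2 → σ)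
    (out : σ → Fin 2 → Fin 2) (hS : ∀ i ∈ S, ∀ v, next i v ∈ S)
    {f g : σ → (ℕ → Fin 2) → ℕ → Fin 2}
    (hf : ∀ i ∈ S, ∀ v w, f i (cons v w) = cons (out i v) (f (next i v) w))
    (hg : ∀ i ∈ S, ∀ v w, g i (cons v w) = cons (out i v) (g (next i v) w)) :
    ∀ i ∈ S, f i = g i := by
  suffices h : ∀ n, ∀ i ∈ S, ∀ x, f i x n = g i x n from
    fun i hi => funext fun x => funext fun n => h n i hi x
  intro n
  induction n with
  | zero =>
    intro i hi x
    rw [← cons_head_tail x, hf i hi, hg i hi]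
    rfl
  | succ n ih =>
    intro i hi x
    rw [← cons_head_tail x, hf i hi, hg i hi]
    exact ih _ (hS i hi _) _

def splice {α : Type*} (x : ℕ → α) (N : ℕ) (t : ℕ → α) : ℕ → α :=
  fun k => if k < N then x k else t (k - N)

theorem splice_mem_cylinder {α : Type*} (x : ℕ → α) (N : ℕ) (t : ℕ → α) :
    splice x N t ∈ PiNat.cylinder x N :=
  fun _ hk => if_pos hk

theorem splice_shift {α : Type*} (x : ℕ → α) (N : ℕ) (t : ℕ → α) :
    (fun k => splice x N t (k + N)) = t :=
  funext fun k => by simp [splice]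

namespace Pink

variable {r s : ℕ}

variable (r s) in
def step (j : ℕ) (v : Fin 2) : ℕ :=
  if j ≤ 1 then 0 else if v = 0 then j - 1 else if j = s + 1 then r else 0

theorem step_zero_letter {j : ℕ} (hj : 2 ≤ j) : step r s j 0 = j - 1 := by
  rw [step, if_neg (by omega), if_pos rfl]

theorem step_one_letter_of_ne {j : ℕ} (hj : 2 ≤ j) (hjs : j ≠ s + 1) : step r s j 1 = 0 := by
  rw [step, if_neg (by omega), if_neg (by decide), if_neg hjs]

theorem step_one_letter_self (hs : 1 ≤ s) : step r s (s + 1) 1 = r := by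
  rw [step, if_neg (by omega), if_neg (by decide), if_pos rfl]

theorem step_le {j : ℕ} (hj : j ≤ r) (v : Fin 2) : step r s j v ≤ r := by
  unfold step; split_ifs <;> omega

variable (r s) in
def state (i : ℕ) (x : ℕ → Fin 2) : ℕ → ℕ
  | 0 => i
  | n + 1 => step r s (state i x n) (x n)

variable (r s) in
def gen (i : ℕ) (x : ℕ → Fin 2) : ℕ → Fin 2 :=
  fun n => if state r s i x n = 1 then 1 - x n else x n

theorem state_add (i : ℕ) (x : ℕ → Fin 2) (m n : ℕ) :
    state r s i x (n + m) = state r s (state r s i x m) (fun k => x (k + m)) n := by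
  induction n with
  | zero => rw [Nat.zero_add]; rfl
  | succ n ih => rw [Nat.add_right_comm, state, ih]; rfl

theorem state_zero_left (x : ℕ → Fin 2) (n : ℕ) : state r s 0 x n = 0 := by
  induction n with
  | zero => rfl
  | succ n ih => rw [state, ih]; rfl

theorem state_congr {i n : ℕ} {x y : ℕ → Fin 2} (h : y ∈ PiNat.cylinder x n) :
    state r s i y n = state r s i x n := by
  induction n with
  | zero => rfl
  | succ n ih =>
    rw [state, state, ih (PiNat.cylinder_anti _ n.le_succ h), h n n.lt_succ_self]

theorem gen_zero : gen r s 0 = id := by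
  funext x n; simp [gen, state_zero_left]

theorem gen_cons (i : ℕ) (v : Fin 2) (w : ℕ → Fin 2) :
    gen r s i (cons v w) = cons (if i = 1 then 1 - v else v) (gen r s (step r s i v) w) := by
  funext n
  cases n with
  | zero => simp only [gen, state]; rfl
  | succ n => simp only [gen, state_add i (cons v w) 1 n]; rfl

theorem gen_eq_self_iff {i : ℕ} {x : ℕ → Fin 2} : gen r s i x = x ↔ ∀ n, state r s i x n ≠ 1 := by
  refine ⟨fun h n hn => ?_, fun h => funext fun n => if_neg (h n)⟩
  have := congrFun h n
  rw [gen, if_pos hn] at this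
  exact (by decide : ∀ a : Fin 2, 1 - a ≠ a) _ this

theorem state_gen (i : ℕ) (x : ℕ → Fin 2) (n : ℕ) :
    state r s i (gen r s i x) n = state r s i x n := by
  induction n with
  | zero => rfl
  | succ n ih =>
    rw [state, state, ih]
    by_cases h : state r s i x n = 1
    · simp [step, h]
    · simp [gen, h]

theorem gen_involutive (i : ℕ) : Function.Involutive (gen r s i) := fun x => by
  funext n
  simp only [gen, state_gen]
  split_ifs <;> simp

theorem continuous_state (i n : ℕ) : Continuous fun x => state r s i x n := by
  induction n with
  | zero => exact continuous_const
  | succ n ih =>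
    exact (continuous_of_discreteTopology (f := fun p : ℕ × Fin 2 => step r s p.1 p.2)).comp
      (ih.prodMk (continuous_apply n))

theorem continuous_gen (i : ℕ) : Continuous (gen r s i) :=
  continuous_pi fun n =>
    (continuous_of_discreteTopology
        (f := fun p : ℕ × Fin 2 => if p.1 = 1 then 1 - p.2 else p.2)).comp
      ((continuous_state i n).prodMk (continuous_apply n))

variable (r s) in
def genHomeo (i : ℕ) : (ℕ → Fin 2) ≃ₜ (ℕ → Fin 2) where
  toFun := gen r s i
  invFun := gen r s i
  left_inv := gen_involutive i
  right_inv := gen_involutive i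
  continuous_toFun := continuous_gen i
  continuous_invFun := continuous_gen i

theorem gen_pinkPreRec (hs : 1 ≤ s) : PinkPreRec r s (gen r s) := by
  have hs0 : s ≠ 0 := by omega
  refine ⟨?_, ?_, ?_, ?_, fun i hi2 _ hine => ?_⟩ <;> simp only [gen_cons, step]
  · simp [gen_zero]
  · simp [gen_zero]
  · simp [hs0]
  · simp [hs0]
  · have hi1 : ¬ i ≤ 1 := by omega
    simp [gen_zero, hine, hi1, show i ≠ 1 by omega]

end Pink

open Pink in
theorem PinkPreRec.update_cons {r s : ℕ} {b : ℕ → (ℕ → Fin 2) → ℕ → Fin 2}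
    (hb : PinkPreRec r s b) {j : ℕ} (hj : j ≤ r) (v : Fin 2) (w : ℕ → Fin 2) :
    Function.update b 0 id j (cons v w) =
      cons (if j = 1 then 1 - v else v) (Function.update b 0 id (step r s j v) w) := by
  obtain ⟨h1₀, h1₁, hs₀, hs₁, hother⟩ := hb
  rcases Nat.lt_or_ge j 2 with hj2 | hj2
  · interval_cases j <;> fin_cases v <;> simp [step, *]
  rw [Function.update_of_ne (by omega : j ≠ 0)]
  have hj1 : j ≠ 1 := by omega
  have hj1' : ¬ j ≤ 1 := by omega
  by_cases hjs : j = s + 1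
  · have hs0 : s ≠ 0 := by omega
    have hr0 : r ≠ 0 := by omega
    subst hjs
    fin_cases v <;> simp [step, *]
  · obtain ⟨hj₀, hj₁⟩ := hother j hj2 hj hjs
    have hj0 : j - 1 ≠ 0 := by omega
    fin_cases v <;> simp [step, *]

theorem PinkPreRec.eq_gen {r s : ℕ} {b : ℕ → (ℕ → Fin 2) → ℕ → Fin 2} (hb : PinkPreRec r s b)
    {i : ℕ} (hi : 1 ≤ i) (hir : i ≤ r) : b i = Pink.gen r s i := by
  have := eq_of_cons_recursion (S := {j | j ≤ r}) _ _ (fun _ hj v => Pink.step_le hj v)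
    (fun _ hj => hb.update_cons hj) (fun j _ => Pink.gen_cons j) i hir
  rwa [Function.update_of_ne (by omega)] at this

namespace Pink

variable {r s : ℕ}

theorem state_const_zero {j m : ℕ} (hm : m < j) : state r s j (fun _ => 0) m = j - m := by
  induction m with
  | zero => rfl
  | succ m ih =>
    rw [state, ih (by omega), step_zero_letter (by omega)]
    omega

theorem gen_eq_self_of_mem_cylinder {i M : ℕ} {x : ℕ → Fin 2} (hM : state r s i x M = 0)
    (hne : ∀ k < M, state r s i x k ≠ 1) {y : ℕ → Fin 2} (hy : y ∈ PiNat.cylinder x M) :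
    gen r s i y = y := by
  refine gen_eq_self_iff.2 fun k => ?_
  rcases Nat.lt_or_ge k M with hk | hk
  · rw [state_congr (PiNat.cylinder_anti _ hk.le hy)]
    exact hne k hk
  · obtain ⟨n, rfl⟩ := Nat.exists_eq_add_of_le' hk
    rw [state_add, state_congr hy, hM, state_zero_left]
    omega

theorem state_splice (i N : ℕ) (x t : ℕ → Fin 2) (n : ℕ) :
    state r s i (splice x N t) (n + N) = state r s (state r s i x N) t n := by
  rw [state_add, state_congr (splice_mem_cylinder x N t), splice_shift]

variable (r s) in
def xStarState : ℕ → ℕ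
  | 0 => s + 1
  | k + 1 => step r s (xStarState k) (if xStarState k = s + 1 then 1 else 0)

variable (r s) in
def xStar (k : ℕ) : Fin 2 := if xStarState r s k = s + 1 then 1 else 0

theorem state_xStar (k : ℕ) : state r s (s + 1) (xStar r s) k = xStarState r s k := by
  induction k with
  | zero => rfl
  | succ k ih => rw [state, ih]; rfl

theorem xStarState_mem (hs : 1 ≤ s) (hsr : s < r) (k : ℕ) :
    s + 1 ≤ xStarState r s k ∧ xStarState r s k ≤ r := by
  induction k with
  | zero => exact ⟨le_rfl, hsr⟩
  | succ k ih =>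
    simp only [xStarState, step]
    split_ifs <;> omega

theorem gen_xStar (hs : 1 ≤ s) (hsr : s < r) : gen r s (s + 1) (xStar r s) = xStar r s :=
  gen_eq_self_iff.2 fun k => by
    have := xStarState_mem hs hsr k
    rw [state_xStar]
    omega

theorem exists_gen_ne_near_xStar (hs : 1 ≤ s) (hsr : s < r) (N : ℕ) :
    ∃ y ∈ PiNat.cylinder (xStar r s) N, gen r s (s + 1) y ≠ y := by
  refine ⟨splice (xStar r s) N fun _ => 0, splice_mem_cylinder _ _ _, fun h => ?_⟩
  have hN := xStarState_mem hs hsr N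
  refine gen_eq_self_iff.1 h (xStarState r s N - 1 + N) ?_
  rw [state_splice, state_xStar, state_const_zero (by omega)]
  omega

theorem exists_step_step_eq_zero (hr : 3 ≤ r) (hs : 1 ≤ s) {j : ℕ} (hj : s + 1 ≤ j)
    (hjr : j ≤ r) : ∃ a b : Fin 2, step r s j a ≠ 1 ∧ step r s (step r s j a) b = 0 := by
  by_cases hjs : j = s + 1
  · subst hjs
    by_cases hs2 : 2 ≤ s
    · refine ⟨0, 1, ?_, ?_⟩ <;> rw [step_zero_letter (by omega), Nat.add_sub_cancel]
      · omega
      · exact step_one_letter_of_ne hs2 (by omega)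
    · refine ⟨1, 1, ?_, ?_⟩ <;> rw [step_one_letter_self hs]
      · omega
      · exact step_one_letter_of_ne (by omega) (by omega)
  · refine ⟨1, 0, ?_, ?_⟩ <;> rw [step_one_letter_of_ne (by omega) hjs]
    · omega
    · rfl

theorem exists_cylinder_gen_eq_self_near_xStar (hr : 3 ≤ r) (hs : 1 ≤ s) (hsr : s < r) (N : ℕ) :
    ∃ z ∈ PiNat.cylinder (xStar r s) N, ∃ M, ∀ y ∈ PiNat.cylinder z M, gen r s (s + 1) y = y := by
  have hmem := xStarState_mem hs hsr
  obtain ⟨a, b, ha, hb⟩ := exists_step_step_eq_zero hr hs (hmem N).1 (hmem N).2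
  set z := splice (xStar r s) N (cons a (cons b fun _ => 0))
  refine ⟨z, splice_mem_cylinder _ _ _, 2 + N, fun y hy => gen_eq_self_of_mem_cylinder ?_ ?_ hy⟩
  · rw [state_splice, state_xStar]
    exact hb
  · intro k hk
    rcases Nat.lt_or_ge k N with hkN | hkN
    · rw [state_congr (PiNat.cylinder_anti _ hkN.le (splice_mem_cylinder _ _ _)), state_xStar]
      have := hmem k
      omega
    · obtain ⟨n, rfl⟩ := Nat.exists_eq_add_of_le' hkN
      rw [state_splice, state_xStar]
      have := hmem N
      have hn : n < 2 := by omega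
      interval_cases n
      · change xStarState r s N ≠ 1
        omega
      · exact ha

theorem isNonHausdorffElement_gen (hr : 3 ≤ r) (hs : 1 ≤ s) (hsr : s < r) :
    IsNonHausdorffElement (gen r s (s + 1)) :=
  PiNat.isNonHausdorffElement_of_cylinder (gen_xStar hs hsr) (exists_gen_ne_near_xStar hs hsr)
    (exists_cylinder_gen_eq_self_near_xStar hr hs hsr)

end Pink

/-- For `r ≥ 3` and `1 ≤ s < r`, Pink's recursively defined maps `b₁, …, b_r` exist and
are homeomorphisms of `X = {0,1}^ℕ`, the group `H̃_r = ⟨b₁, …, b_r⟩` contains a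
non-Hausdorff element, and the action of `H̃_r` on `X` is not locally quasi-analytic. -/
theorem stmt9 (r s : ℕ) (hr : 3 ≤ r) (hs : 1 ≤ s) (hsr : s < r) :
    (∃ b : ℕ → (ℕ → Fin 2) → (ℕ → Fin 2), PinkPreRec r s b) ∧
    (∀ b : ℕ → (ℕ → Fin 2) → (ℕ → Fin 2), PinkPreRec r s b →
      ∀ i, 1 ≤ i → i ≤ r → IsHomeomorph (b i)) ∧
    ∀ B : ℕ → (ℕ → Fin 2) ≃ₜ (ℕ → Fin 2), PinkPreRec r s (fun i => ⇑(B i)) →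
      (∃ g ∈ (Subgroup.closure (B '' {i | 1 ≤ i ∧ i ≤ r}) :
          Subgroup ((ℕ → Fin 2) ≃ₜ (ℕ → Fin 2))), IsNonHausdorffElement (⇑g)) ∧
      ¬ IsLocallyQuasiAnalytic
        ((fun g : (ℕ → Fin 2) ≃ₜ (ℕ → Fin 2) => ⇑g) ''
          ((Subgroup.closure (B '' {i | 1 ≤ i ∧ i ≤ r}) :
            Subgroup ((ℕ → Fin 2) ≃ₜ (ℕ → Fin 2))) : Set ((ℕ → Fin 2) ≃ₜ (ℕ → Fin 2)))) := by
  refine ⟨⟨Pink.gen r s, Pink.gen_pinkPreRec hs⟩, fun b hb i hi hir => ?_, fun B hB => ?_⟩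
  · rw [hb.eq_gen hi hir]
    exact (Pink.genHomeo r s i).isHomeomorph
  set H := Subgroup.closure (B '' {i | 1 ≤ i ∧ i ≤ r})
  have hmem : B (s + 1) ∈ H := Subgroup.subset_closure ⟨s + 1, ⟨by omega, by omega⟩, rfl⟩
  have hB' : ⇑(B (s + 1)) = Pink.gen r s (s + 1) := hB.eq_gen (by omega) (by omega)
  have hnH : IsNonHausdorffElement ⇑(B (s + 1)) := hB' ▸ Pink.isNonHausdorffElement_gen hr hs hsr
  exact ⟨⟨_, hmem, hnH⟩, hnH.not_isLocallyQuasiAnalytic ⟨1, H.one_mem, rfl⟩ ⟨_, hmem, rfl⟩⟩
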